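/- arXiv:2206.03654 — 2 statements merged into one kernel-verified Lean document; each statement's English description precedes it below -/
import Mathlib

section
/- Let (Ω, μ) be a probability space, α ∈ [0,1), t ∈ ℕ. Let o₀, …, o_t be random variables taking values in {0,1}, and let W₀, …, W_t be square-integrable random variables with E[W_i] = 0 and Var(W_i) = σ² for all i, such that for each i, W_i is independent of o_i, and the postsynaptic potentials x_i = W_i·o_i (i = 0,…,t) are mutually independent. Define u(0) = 0 and u(i+1) = α·u(i) + (1−α)·x_i. Then Var(u(t+1)) = σ² · Σ_{i=0}^{t} (1−α)²·α^{2(t−i)}·E[o_i]. -/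
open MeasureTheory ProbabilityTheory Finset

/-! Unrolling the recursion writes `u (t+1)` as the weighted sum
`∑ i ≤ t, (1-α) α^(t-i) x i` of independent inputs, so its variance is
`∑ i ≤ t, (1-α)² α^(2(t-i)) Var(x i)`. Since `W i` is centred and independent of the
`{0,1}`-valued spike `o i`, `Var(W i · o i) = E[W i²] E[o i²] = σ² E[o i]`. -/

theorem eq_sum_of_linear_recurrence {R : Type*} [CommSemiring R] {a b : R} {u x : ℕ → R}
    (h0 : u 0 = 0) (hrec : ∀ i, u (i + 1) = a * u i + b * x i) (n : ℕ) :
    u (n + 1) = ∑ i ∈ range (n + 1), b * a ^ (n - i) * x i := by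
  induction n with
  | zero => simp [hrec 0, h0]
  | succ n ih =>
    rw [hrec (n + 1), ih, mul_sum, sum_range_succ _ (n + 1), Nat.sub_self, pow_zero, mul_one]
    congr 1
    refine sum_congr rfl fun i hi => ?_
    rw [Nat.sub_add_comm (Nat.lt_succ_iff.mp (mem_range.mp hi)), pow_succ]
    ring

namespace ProbabilityTheory

variable {Ω : Type*} [MeasurableSpace Ω] {μ : Measure Ω} {X Y : Ω → ℝ}

theorem IndepFun.pow (h : X ⟂ᵢ[μ] Y) (m n : ℕ) : (X ^ m) ⟂ᵢ[μ] (Y ^ n) :=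
  (h.comp (measurable_id.pow_const m) (measurable_id.pow_const n) :)

theorem IndepFun.memLp_two_mul (h : X ⟂ᵢ[μ] Y) (hX : MemLp X 2 μ) (hY : MemLp Y 2 μ) :
    MemLp (X * Y) 2 μ := by
  refine (memLp_two_iff_integrable_sq (hX.aestronglyMeasurable.mul hY.aestronglyMeasurable)).2 ?_
  simp_rw [Pi.mul_apply, mul_pow]
  exact (h.pow 2 2).integrable_mul hX.integrable_sq hY.integrable_sq

theorem IndepFun.variance_mul_of_integral_eq_zero (h : X ⟂ᵢ[μ] Y)
    (hX : AEStronglyMeasurable X μ) (hY : AEStronglyMeasurable Y μ) (hX0 : μ[X] = 0) :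
    Var[X * Y; μ] = Var[X; μ] * μ[Y ^ 2] := by
  have hXY0 : μ[X * Y] = 0 := by rw [h.integral_mul_eq_mul_integral hX hY, hX0, zero_mul]
  rw [variance_of_integral_eq_zero (hX.mul hY).aemeasurable hXY0,
    variance_of_integral_eq_zero hX.aemeasurable hX0]
  change μ[(X * Y) ^ 2] = μ[X ^ 2] * μ[Y ^ 2]
  rw [mul_pow, (h.pow 2 2).integral_mul_eq_mul_integral (hX.pow 2) (hY.pow 2)]

theorem iIndepFun.variance_sum_const_mul {X : ℕ → Ω → ℝ} {n : ℕ} (c : ℕ → ℝ)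
    (hX : ∀ i < n, MemLp (X i) 2 μ) (h : iIndepFun (fun i : Fin n => X i) μ) :
    Var[fun ω => ∑ i ∈ range n, c i * X i ω; μ] = ∑ i ∈ range n, c i ^ 2 * Var[X i; μ] := by
  have hfun : (fun ω => ∑ i ∈ range n, c i * X i ω) = ∑ i ∈ range n, fun ω => c i * X i ω := by
    funext ω
    rw [Finset.sum_apply]
  rw [hfun, IndepFun.variance_sum (fun i hi => (hX i (mem_range.mp hi)).const_mul (c i))]
  · exact sum_congr rfl fun i _ => variance_const_mul (c i) (X i) μ
  · intro i hi j hj hij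
    have hne : (⟨i, mem_range.mp hi⟩ : Fin n) ≠ ⟨j, mem_range.mp hj⟩ := by simpa using hij
    exact (h.indepFun hne).comp (measurable_const_mul (c i)) (measurable_const_mul (c j))

end ProbabilityTheory

theorem variance_lif_potential_general
    {Ω : Type*} [MeasurableSpace Ω] (μ : Measure Ω) [IsProbabilityMeasure μ]
    (α : ℝ)
    (t : ℕ) (σ2 : ℝ)
    (o W x : ℕ → Ω → ℝ) (u : ℕ → Ω → ℝ)
    (ho_meas : ∀ i, Measurable (o i))
    (ho01 : ∀ i, ∀ ω, o i ω = 0 ∨ o i ω = 1)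
    (hW : ∀ i, MemLp (W i) 2 μ)
    (hWmean : ∀ i, μ[W i] = 0)
    (hWvar : ∀ i, variance (W i) μ = σ2)
    (hindep : ∀ i, IndepFun (W i) (o i) μ)
    (hx : ∀ i, x i = fun ω => W i ω * o i ω)
    (hx_indep : iIndepFun
      (fun i : Fin (t + 1) => x i) μ)
    (hu0 : u 0 = fun _ => 0)
    (hurec : ∀ i, u (i + 1) = fun ω => α * u i ω + (1 - α) * x i ω) :
    variance (u (t + 1)) μ
      = σ2 * ∑ i ∈ Finset.range (t + 1), (1 - α) ^ 2 * α ^ (2 * (t - i)) * μ[o i] := by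
  have hu : u (t + 1) = fun ω => ∑ i ∈ range (t + 1), (1 - α) * α ^ (t - i) * x i ω :=
    funext fun ω => eq_sum_of_linear_recurrence (u := (u · ω)) (x := (x · ω))
      (congrFun hu0 ω) (fun i => congrFun (hurec i) ω) t
  have ho_sq : ∀ i, o i ^ 2 = o i := fun i => funext fun ω => by
    rcases ho01 i ω with h | h <;> simp [h]
  have ho : ∀ i, MemLp (o i) 2 μ := fun i =>
    MemLp.of_bound (ho_meas i).aestronglyMeasurable 1 (ae_of_all μ fun ω => by
      rcases ho01 i ω with h | h <;> simp [h])
  have hx_mem : ∀ i, MemLp (x i) 2 μ := fun i => by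
    rw [hx i]
    exact (hindep i).memLp_two_mul (hW i) (ho i)
  have hx_var : ∀ i, Var[x i; μ] = σ2 * μ[o i] := fun i => by
    have h := (hindep i).variance_mul_of_integral_eq_zero (hW i).aestronglyMeasurable
      (ho_meas i).aestronglyMeasurable (hWmean i)
    rw [hWvar i, ho_sq i] at h
    rw [hx i]
    exact h
  rw [hu, iIndepFun.variance_sum_const_mul _ (fun i _ => hx_mem i) hx_indep, mul_sum]
  refine sum_congr rfl fun i _ => ?_
  rw [hx_var i, mul_pow, ← pow_mul, mul_comm (t - i) 2]
  ring

/-- Lemma 1: under the LIF recursion with zero-mean weights of variance `σ²`,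
each independent of the corresponding spike, and mutually independent inputs
`x i = W i · o i`, the membrane potential variance is
`Var(u (t+1)) = σ² · Σ_{i=0}^{t} (1−α)²·α^{2(t−i)}·E[o i]`. -/
theorem variance_lif_potential
    {Ω : Type*} [MeasurableSpace Ω] (μ : Measure Ω) [IsProbabilityMeasure μ]
    (α : ℝ) (hα : α ∈ Set.Ico (0 : ℝ) 1)
    (t : ℕ) (σ2 : ℝ)
    (o W x : ℕ → Ω → ℝ) (u : ℕ → Ω → ℝ)
    (ho_meas : ∀ i, Measurable (o i))
    (ho01 : ∀ i, ∀ ω, o i ω = 0 ∨ o i ω = 1)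
    (hW : ∀ i, MemLp (W i) 2 μ)
    (hWmean : ∀ i, μ[W i] = 0)
    (hWvar : ∀ i, variance (W i) μ = σ2)
    (hindep : ∀ i, IndepFun (W i) (o i) μ)
    (hx : ∀ i, x i = fun ω => W i ω * o i ω)
    (hx_indep : iIndepFun
      (fun i : Fin (t + 1) => x i) μ)
    (hu0 : u 0 = fun _ => 0)
    (hurec : ∀ i, u (i + 1) = fun ω => α * u i ω + (1 - α) * x i ω) :
    variance (u (t + 1)) μ
      = σ2 * ∑ i ∈ Finset.range (t + 1), (1 - α) ^ 2 * α ^ (2 * (t - i)) * μ[o i] :=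
  variance_lif_potential_general μ α t σ2 o W x u ho_meas ho01 hW hWmean hWvar hindep hx hx_indep
    hu0 hurec
end

section
/- Let (Ω, μ) be a probability space, α ∈ (0,1), V_th > 0, and t ∈ ℕ. Let o₀, …, o_t be {0,1}-valued random variables, W₀, …, W_t square-integrable random variables with E[W_i] = 0 and Var(W_i) = σ², each W_i independent of o_i, and the inputs x_i = W_i·o_i mutually independent. Define u(0) = 0, u(i+1) = α·u(i) + (1−α)·x_i, and suppose the distribution of u(t+1) is symmetric (u(t+1) and −u(t+1) identically distributed). Define the output spike o_{t+1} = 1 if u(t+1) > V_th and 0 otherwise. Then, with ε = σ²/(2·V_th²), E[o_{t+1}] ≤ ε · Σ_{i=0}^{t} E[o_i]. -/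
/-!
Unrolling the recurrence gives `u (t+1) = ∑ i, α^(t-i) (1-α) x i` with coefficients in `[0, 1]`.
Each `x i = W i * o i` is centred with variance `σ² E[o i]` (as `o i ^ 2 = o i`), so by
independence `E[u (t+1)²] ≤ σ² ∑ E[o i]`. By symmetry `P(u > V) = P(-u > V)`, and Chebyshev's
inequality for the event `|u| > V` bounds twice the spike probability by `E[u²] / V²`.
-/

open MeasureTheory ProbabilityTheory Finset

lemma eq_sum_pow_mul_of_rec {a b : ℝ} {u x : ℕ → ℝ} (h0 : u 0 = 0)
    (hrec : ∀ i, u (i + 1) = a * u i + b * x i) (n : ℕ) :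
    u (n + 1) = ∑ i ∈ range (n + 1), a ^ (n - i) * b * x i := by
  induction n with
  | zero => simp [hrec 0, h0]
  | succ n ih =>
    rw [hrec, ih, sum_range_succ _ (n + 1), mul_sum, Nat.sub_self, pow_zero, one_mul]
    congr 1
    refine sum_congr rfl fun i hi => ?_
    rw [Nat.sub_add_comm (mem_range_succ_iff.mp hi), pow_succ]
    ring

lemma ite_lt_add_ite_lt_neg_le {V : ℝ} (hV : 0 < V) (y : ℝ) :
    ((if V < y then 1 else 0) + if V < -y then 1 else 0 : ℝ) ≤ y ^ 2 / V ^ 2 := by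
  have hy : 0 ≤ y ^ 2 / V ^ 2 := by positivity
  have hVy : V < |y| → 1 ≤ y ^ 2 / V ^ 2 := fun h => by
    rw [one_le_div (by positivity), ← sq_abs y]
    exact pow_le_pow_left₀ hV.le h.le 2
  split_ifs with h₁ h₂ h₂
  · linarith
  · linarith [hVy (lt_abs.2 (.inl h₁))]
  · linarith [hVy (lt_abs.2 (.inr h₂))]
  · linarith

section

variable {Ω : Type*} [MeasurableSpace Ω] {μ : Measure Ω}

lemma integral_ite_lt_le_of_map_neg_eq [IsFiniteMeasure μ] {U : Ω → ℝ} (hU : MemLp U 2 μ)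
    (hsymm : μ.map U = μ.map (-U)) {V : ℝ} (hV : 0 < V) :
    ∫ ω, (if V < U ω then 1 else 0 : ℝ) ∂μ ≤ (∫ ω, U ω ^ 2 ∂μ) / (2 * V ^ 2) := by
  set g : ℝ → ℝ := fun y => if V < y then 1 else 0
  have hg : Measurable g := Measurable.ite measurableSet_Ioi measurable_const measurable_const
  have hUm : AEMeasurable U μ := hU.aestronglyMeasurable.aemeasurable
  have hg_int : ∀ {X : Ω → ℝ}, AEMeasurable X μ → Integrable (fun ω => g (X ω)) μ := fun hX =>
    .of_bound (hg.comp_aemeasurable hX).aestronglyMeasurable 1 <| ae_of_all _ fun ω => by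
      simp only [g]; split_ifs <;> simp
  have hflip : ∫ ω, g (U ω) ∂μ = ∫ ω, g (-U ω) ∂μ :=
    ((IdentDistrib.mk hUm hUm.neg hsymm).comp hg).integral_eq
  have htail : ∫ ω, g (U ω) ∂μ + ∫ ω, g (-U ω) ∂μ ≤ (∫ ω, U ω ^ 2 ∂μ) / V ^ 2 := by
    have hUneg := hg_int (X := fun ω => -U ω) hUm.neg
    rw [← integral_add (hg_int hUm) hUneg, ← integral_div]
    exact integral_mono ((hg_int hUm).add hUneg) (hU.integrable_sq.div_const _)
      fun ω => ite_lt_add_ite_lt_neg_le hV (U ω)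
  rw [← hflip] at htail
  rw [mul_comm, ← div_div, le_div_iff₀ two_pos]
  linarith

lemma memLp_mul_of_eq_zero_or_one {W o : Ω → ℝ} (hW : MemLp W 2 μ) (ho : Measurable o)
    (ho01 : ∀ ω, o ω = 0 ∨ o ω = 1) : MemLp (W * o) 2 μ :=
  hW.mono (hW.aestronglyMeasurable.mul ho.aestronglyMeasurable) <| ae_of_all _ fun ω => by
    rcases ho01 ω with h | h <;> simp [h]

lemma integral_mul_eq_zero_of_indepFun {W o : Ω → ℝ} (hW : AEStronglyMeasurable W μ)
    (hWmean : μ[W] = 0) (ho : Measurable o) (hWo : IndepFun W o μ) : μ[W * o] = 0 := by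
  rw [hWo.integral_mul_eq_mul_integral hW ho.aestronglyMeasurable, hWmean, zero_mul]

lemma variance_mul_of_indepFun {W o : Ω → ℝ} (hW : MemLp W 2 μ) (hWmean : μ[W] = 0)
    (ho : Measurable o) (ho01 : ∀ ω, o ω = 0 ∨ o ω = 1) (hWo : IndepFun W o μ) :
    variance (W * o) μ = variance W μ * μ[o] := by
  have hWo_sq : IndepFun (fun ω => W ω ^ 2) o μ :=
    hWo.comp (measurable_id.pow_const 2) measurable_id
  rw [variance_of_integral_eq_zero (memLp_mul_of_eq_zero_or_one hW ho ho01).aemeasurable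
      (integral_mul_eq_zero_of_indepFun hW.aestronglyMeasurable hWmean ho hWo),
    variance_of_integral_eq_zero hW.aemeasurable hWmean]
  calc ∫ ω, (W * o) ω ^ 2 ∂μ = ∫ ω, W ω ^ 2 * o ω ∂μ := by
        refine integral_congr_ae <| ae_of_all _ fun ω => ?_
        rcases ho01 ω with h | h <;> simp [h]
    _ = _ := hWo_sq.integral_mul_eq_mul_integral hW.integrable_sq.aestronglyMeasurable
        ho.aestronglyMeasurable

lemma integral_sq_sum_smul_le [IsFiniteMeasure μ] {ι : Type*} [Fintype ι] {X : ι → Ω → ℝ}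
    (hX : ∀ i, MemLp (X i) 2 μ) (hmean : ∀ i, μ[X i] = 0) (hind : iIndepFun X μ)
    {c : ι → ℝ} (hc : ∀ i, |c i| ≤ 1) :
    ∫ ω, (∑ i, c i • X i) ω ^ 2 ∂μ ≤ ∑ i, variance (X i) μ := by
  have hcX : ∀ i, MemLp (c i • X i) 2 μ := fun i => (hX i).const_smul (c i)
  have hsum_mean : μ[∑ i, c i • X i] = 0 := by
    simp only [Finset.sum_apply]
    rw [integral_finsetSum _ fun i _ => (hcX i).integrable one_le_two]
    simp [integral_const_mul, hmean]
  rw [← variance_of_integral_eq_zero (memLp_finsetSum' _ fun i _ => hcX i).aemeasurable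
      hsum_mean, IndepFun.variance_sum (fun i _ => hcX i)
      fun i _ j _ hij => (hind.indepFun hij).comp (measurable_const_mul _) (measurable_const_mul _)]
  refine sum_le_sum fun i _ => ?_
  rw [variance_smul]
  exact mul_le_of_le_one_left (variance_nonneg _ _) (sq_le_one_iff_abs_le_one _ |>.2 (hc i))

end

/-- Theorem 1: for an LIF neuron with membrane potential
`u (i+1) = α·u i + (1−α)·W i·o i` driven by {0,1}-valued spikes `o i` weighted by
zero-mean weights of variance `σ²`, if `u (t+1)` is symmetric then the output spike
`o_{t+1} = H(u_{t+1} − V_th)` satisfies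
`E[o_{t+1}] ≤ ε · Σ_{i=0}^{t} E[o i]` with `ε = σ²/(2·V_th²)`. -/
theorem spike_expectation_bound
    {Ω : Type*} [MeasurableSpace Ω] (μ : Measure Ω) [IsProbabilityMeasure μ]
    (α : ℝ) (hα : α ∈ Set.Ioo (0 : ℝ) 1)
    (Vth : ℝ) (hVth : 0 < Vth)
    (t : ℕ) (σ2 : ℝ)
    (o W x : ℕ → Ω → ℝ) (u : ℕ → Ω → ℝ) (oT : Ω → ℝ)
    (ho_meas : ∀ i, Measurable (o i))
    (ho01 : ∀ i, ∀ ω, o i ω = 0 ∨ o i ω = 1)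
    (hW : ∀ i, MemLp (W i) 2 μ)
    (hWmean : ∀ i, μ[W i] = 0)
    (hWvar : ∀ i, variance (W i) μ = σ2)
    (hindep : ∀ i, IndepFun (W i) (o i) μ)
    (hx : ∀ i, x i = fun ω => W i ω * o i ω)
    (hx_indep : iIndepFun
      (fun i : Fin (t + 1) => x i) μ)
    (hu0 : u 0 = fun _ => 0)
    (hurec : ∀ i, u (i + 1) = fun ω => α * u i ω + (1 - α) * x i ω)
    (husymm : Measure.map (u (t + 1)) μ = Measure.map (fun ω => -(u (t + 1) ω)) μ)
    (hoT : ∀ ω, oT ω = if Vth < u (t + 1) ω then 1 else 0) :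
    μ[oT] ≤ σ2 / (2 * Vth ^ 2) * ∑ i ∈ Finset.range (t + 1), μ[o i] := by
  obtain ⟨hα0, hα1⟩ := hα
  set c : Fin (t + 1) → ℝ := fun i => α ^ (t - i) * (1 - α)
  have hc : ∀ i, |c i| ≤ 1 := fun i => by
    rw [abs_of_nonneg (mul_nonneg (pow_nonneg hα0.le _) (sub_nonneg.2 hα1.le))]
    exact mul_le_one₀ (pow_le_one₀ hα0.le hα1.le) (sub_nonneg.2 hα1.le) (by linarith)
  have hxWo : ∀ i, x i = W i * o i := hx
  have hx_L2 : ∀ i, MemLp (x i) 2 μ := fun i =>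
    hxWo i ▸ memLp_mul_of_eq_zero_or_one (hW i) (ho_meas i) (ho01 i)
  have hx_mean : ∀ i, μ[x i] = 0 := fun i =>
    hxWo i ▸ integral_mul_eq_zero_of_indepFun (hW i).aestronglyMeasurable (hWmean i) (ho_meas i)
      (hindep i)
  have hx_var : ∀ i, variance (x i) μ = σ2 * μ[o i] := fun i => by
    rw [hxWo, variance_mul_of_indepFun (hW i) (hWmean i) (ho_meas i) (ho01 i) (hindep i), hWvar]
  have hU : u (t + 1) = ∑ i : Fin (t + 1), c i • x i := by
    funext ω
    rw [eq_sum_pow_mul_of_rec (u := fun i => u i ω) (x := fun i => x i ω) (congrFun hu0 ω)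
      (fun i => congrFun (hurec i) ω), Finset.sum_apply, ← Fin.sum_univ_eq_sum_range]
    rfl
  have hU_L2 : MemLp (u (t + 1)) 2 μ := hU ▸ memLp_finsetSum' _ fun i _ => (hx_L2 i).const_smul _
  calc μ[oT] = ∫ ω, (if Vth < u (t + 1) ω then 1 else 0 : ℝ) ∂μ := by simp_rw [hoT]
    _ ≤ (∫ ω, u (t + 1) ω ^ 2 ∂μ) / (2 * Vth ^ 2) :=
      integral_ite_lt_le_of_map_neg_eq hU_L2 husymm hVth
    _ ≤ (∑ i : Fin (t + 1), variance (x i) μ) / (2 * Vth ^ 2) := by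
      rw [hU]
      gcongr
      exact integral_sq_sum_smul_le (X := fun i : Fin (t + 1) => x i) (fun i => hx_L2 i)
        (fun i => hx_mean i) hx_indep hc
    _ = σ2 / (2 * Vth ^ 2) * ∑ i ∈ range (t + 1), μ[o i] := by
      rw [Fin.sum_univ_eq_sum_range (fun i => variance (x i) μ), sum_congr rfl fun i _ => hx_var i,
        ← mul_sum]
      ring
end
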